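/- Let d ≥ 2, let Ω be a d×d Hermitian complex matrix with 0 ≤ Ω ≤ I, and let ψ ∈ ℂ^d be a unit vector with Ωψ = ψ. Then for every ε with 0 ≤ ε ≤ 1 there exists a density matrix ρ on ℂ^d with ⟨ψ, ρψ⟩ = 1 − ε and Tr(Ωρ) = 1 − ν(Ω)·ε; in other words, the worst-case passing probability max{Tr(Ωρ) : ρ density matrix, ⟨ψ, ρψ⟩ ≤ 1 − ε} equals 1 − ν(Ω)·ε. -/

import Mathlib

open Matrix
open scoped ComplexOrder

/-- The second eigenvalue `λ₂(Ω)` of a strategy operator `Ω` relative to the target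
state `ψ`: the supremum of `⟨φ, Ω φ⟩` over unit vectors `φ` orthogonal to `ψ`. -/
noncomputable def secondEigenvalue (d : ℕ) (Ω : Matrix (Fin d) (Fin d) ℂ)
    (ψ : Fin d → ℂ) : ℝ :=
  sSup {x : ℝ | ∃ φ : Fin d → ℂ,
    star φ ⬝ᵥ φ = 1 ∧ star φ ⬝ᵥ ψ = 0 ∧ (star φ ⬝ᵥ (Ω *ᵥ φ)).re = x}

/-- The spectral gap `ν(Ω) = 1 - λ₂(Ω)`. -/
noncomputable def spectralGap (d : ℕ) (Ω : Matrix (Fin d) (Fin d) ℂ)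
    (ψ : Fin d → ℂ) : ℝ :=
  1 - secondEigenvalue d Ω ψ

/-!
`Ω` is Hermitian and fixes `ψ`, so it preserves the orthogonal complement of `ψ`, where its
quadratic form is at most `λ₂`. Splitting `v = ⟨ψ, v⟩ ψ + w` with `w ⊥ ψ` gives the Loewner bound
`Ω ≤ λ₂ I + ν |ψ⟩⟨ψ|`; pairing it with a density matrix `ρ` gives
`Tr(Ω ρ) ≤ 1 - ν (1 - ⟨ψ, ρ ψ⟩)`, which is at most `1 - ν ε` because `ν ≥ 0` (from `Ω ≤ I`).
The unit sphere of the orthogonal complement of `ψ` is compact and, for `d ≥ 2`, nonempty, so `λ₂`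
is attained at some unit `φ ⊥ ψ`, and `ρ = (1 - ε) |ψ⟩⟨ψ| + ε |φ⟩⟨φ|` attains the bound.
-/

section

variable {n : Type*} [Fintype n]

lemma re_star_dotProduct_self (v : n → ℂ) : (star v ⬝ᵥ v).re = ∑ i, ‖v i‖ ^ 2 := by
  simp [dotProduct, Complex.re_sum, Complex.conj_mul', ← Complex.ofReal_pow]

lemma star_dotProduct_self_eq_ofReal_re (v : n → ℂ) : star v ⬝ᵥ v = ((star v ⬝ᵥ v).re : ℂ) :=
  Complex.eq_re_of_ofReal_le (r := 0) (by simp)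

lemma star_smul_dotProduct_mulVec_smul (A : Matrix n n ℂ) (r : ℝ) (w : n → ℂ) :
    star ((r : ℂ) • w) ⬝ᵥ (A *ᵥ ((r : ℂ) • w)) = r ^ 2 * (star w ⬝ᵥ (A *ᵥ w)) := by
  simp only [star_smul, mulVec_smul, smul_dotProduct, dotProduct_smul, smul_eq_mul,
    Complex.star_def, Complex.conj_ofReal]
  ring

lemma exists_ofReal_smul_star_dotProduct_self_eq_one {w : n → ℂ} (hw : w ≠ 0) :
    ∃ r : ℝ, star ((r : ℂ) • w) ⬝ᵥ ((r : ℂ) • w) = 1 := by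
  classical
  set s := (star w ⬝ᵥ w).re
  have hs : star w ⬝ᵥ w = s := star_dotProduct_self_eq_ofReal_re w
  have hpos : 0 < s := (Complex.pos_iff.mp (dotProduct_star_self_pos_iff.mpr hw)).1
  refine ⟨(√s)⁻¹, ?_⟩
  have h := star_smul_dotProduct_mulVec_smul 1 (√s)⁻¹ w
  simp only [one_mulVec] at h
  rw [h, hs, ← Complex.ofReal_pow, ← Complex.ofReal_mul,
    Complex.ofReal_eq_one, inv_pow, Real.sq_sqrt hpos.le, inv_mul_cancel₀ hpos.ne']

lemma dotProduct_vecMulVec_star_mulVec (x y : n → ℂ) :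
    star x ⬝ᵥ (vecMulVec y (star y) *ᵥ x) = (star x ⬝ᵥ y) * (star y ⬝ᵥ x) := by
  rw [vecMulVec_mulVec, op_smul_eq_smul, dotProduct_smul, smul_eq_mul, mul_comm]

lemma trace_mul_vecMulVec_star (A : Matrix n n ℂ) (x : n → ℂ) :
    (A * vecMulVec x (star x)).trace = star x ⬝ᵥ (A *ᵥ x) := by
  rw [mul_vecMulVec, trace_vecMulVec, dotProduct_comm]

lemma re_trace_mul_le_of_forall_re_dotProduct_mulVec_le {A B ρ : Matrix n n ℂ}
    (hρ : ρ.PosSemidef) (hAB : ∀ v, (star v ⬝ᵥ (A *ᵥ v)).re ≤ (star v ⬝ᵥ (B *ᵥ v)).re) :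
    (A * ρ).trace.re ≤ (B * ρ).trace.re := by
  obtain ⟨m, v, rfl⟩ := posSemidef_iff_eq_sum_vecMulVec.mp hρ
  simp only [Matrix.mul_sum, trace_sum, trace_mul_vecMulVec_star, Complex.re_sum]
  exact Finset.sum_le_sum fun i _ => hAB (v i)

lemma star_dotProduct_mulVec_eq_add_of_mulVec_eq_self {A : Matrix n n ℂ} (hA : A.IsHermitian)
    {ψ : n → ℂ} (hψ : star ψ ⬝ᵥ ψ = 1) (hAψ : A *ᵥ ψ = ψ) (v : n → ℂ) :
    star v ⬝ᵥ (A *ᵥ v) = star (star ψ ⬝ᵥ v) * (star ψ ⬝ᵥ v)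
      + star (v - (star ψ ⬝ᵥ v) • ψ) ⬝ᵥ (A *ᵥ (v - (star ψ ⬝ᵥ v) • ψ)) := by
  have hψA : star ψ ᵥ* A = star ψ := by rw [← hA.eq, ← star_mulVec, hAψ]
  set c := star ψ ⬝ᵥ v
  have hψv : star v ⬝ᵥ ψ = star c := by rw [star_dotProduct]
  have hψAv : star ψ ⬝ᵥ (A *ᵥ v) = c := by rw [dotProduct_mulVec, hψA]
  simp only [mulVec_sub, mulVec_smul, hAψ, star_sub, star_smul, sub_dotProduct, dotProduct_sub,
    smul_dotProduct, dotProduct_smul, hψv, hψAv, hψ, smul_eq_mul, Complex.star_def]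
  ring

def orthUnitSphere (ψ : n → ℂ) : Set (n → ℂ) := {φ | star φ ⬝ᵥ φ = 1 ∧ star φ ⬝ᵥ ψ = 0}

lemma isCompact_orthUnitSphere (ψ : n → ℂ) : IsCompact (orthUnitSphere ψ) := by
  refine Metric.isCompact_of_isClosed_isBounded ?_ ?_
  · exact (isClosed_eq (continuous_star.dotProduct continuous_id) continuous_const).inter
      (isClosed_eq (continuous_star.dotProduct continuous_const) continuous_const)
  · refine (Metric.isBounded_iff_subset_closedBall 0).mpr ⟨1, fun φ hφ => ?_⟩
    rw [mem_closedBall_zero_iff, pi_norm_le_iff_of_nonneg zero_le_one]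
    intro i
    have h : ∑ j, ‖φ j‖ ^ 2 = 1 := by rw [← re_star_dotProduct_self, hφ.1, Complex.one_re]
    have hi : ‖φ i‖ ^ 2 ≤ 1 :=
      h ▸ Finset.single_le_sum (fun j _ => sq_nonneg ‖φ j‖) (Finset.mem_univ i)
    exact (pow_le_one_iff_of_nonneg (norm_nonneg _) two_ne_zero).mp hi

lemma orthUnitSphere_nonempty (hn : 1 < Fintype.card n) (ψ : n → ℂ) :
    (orthUnitSphere ψ).Nonempty := by
  have hker : LinearMap.ker (dotProductBilin ℂ ℂ (star ψ)) ≠ ⊥ :=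
    LinearMap.ker_ne_bot_of_finrank_lt (by simpa [Module.finrank_fintype_fun_eq_card] using hn)
  obtain ⟨w, hw, hw0⟩ := (Submodule.ne_bot_iff _).mp hker
  obtain ⟨r, hr⟩ := exists_ofReal_smul_star_dotProduct_self_eq_one hw0
  have hwψ : star w ⬝ᵥ ψ = 0 := by
    rw [star_dotProduct, star_eq_zero]
    exact hw
  exact ⟨(r : ℂ) • w, hr, by rw [star_smul, smul_dotProduct, hwψ, smul_zero]⟩

lemma exists_density_matrix_of_mem_orthUnitSphere {ψ φ : n → ℂ} (hψ : star ψ ⬝ᵥ ψ = 1)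
    (hφ : φ ∈ orthUnitSphere ψ) (A : Matrix n n ℂ) (hAψ : A *ᵥ ψ = ψ) {ε : ℝ} (hε0 : 0 ≤ ε)
    (hε1 : ε ≤ 1) :
    ∃ ρ : Matrix n n ℂ, ρ.PosSemidef ∧ ρ.trace = 1 ∧ (star ψ ⬝ᵥ (ρ *ᵥ ψ)).re = 1 - ε ∧
      (A * ρ).trace.re = 1 - ε + ε * (star φ ⬝ᵥ (A *ᵥ φ)).re := by
  have hψφ : star ψ ⬝ᵥ φ = 0 := by rw [star_dotProduct, hφ.2, star_zero]
  refine ⟨(1 - ε) • vecMulVec ψ (star ψ) + ε • vecMulVec φ (star φ),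
    ((posSemidef_vecMulVec_self_star ψ).smul (sub_nonneg.mpr hε1)).add
      ((posSemidef_vecMulVec_self_star φ).smul hε0), ?_, ?_, ?_⟩
  · simp [trace_vecMulVec, dotProduct_comm _ (star _), hψ, hφ.1]
  · simp [add_mulVec, smul_mulVec, dotProduct_vecMulVec_star_mulVec, hψ, hψφ]
  · simp [Matrix.mul_add, trace_mul_vecMulVec_star, hAψ, hψ]

lemma continuous_re_star_dotProduct_mulVec (A : Matrix n n ℂ) :
    Continuous fun v : n → ℂ => (star v ⬝ᵥ (A *ᵥ v)).re :=
  Complex.continuous_re.comp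
    (continuous_star.dotProduct (continuous_const.matrix_mulVec continuous_id))

end

section

variable {d : ℕ} (Ω : Matrix (Fin d) (Fin d) ℂ) (ψ : Fin d → ℂ)

lemma secondEigenvalue_eq_sSup_image : secondEigenvalue d Ω ψ =
    sSup ((fun φ => (star φ ⬝ᵥ (Ω *ᵥ φ)).re) '' orthUnitSphere ψ) := by
  unfold secondEigenvalue
  congr 1
  ext x
  simp [orthUnitSphere, and_assoc]

lemma re_dotProduct_mulVec_le_secondEigenvalue {φ : Fin d → ℂ} (hφ : φ ∈ orthUnitSphere ψ) :
    (star φ ⬝ᵥ (Ω *ᵥ φ)).re ≤ secondEigenvalue d Ω ψ := by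
  rw [secondEigenvalue_eq_sSup_image]
  exact le_csSup ((isCompact_orthUnitSphere ψ).image
    (continuous_re_star_dotProduct_mulVec Ω)).bddAbove (Set.mem_image_of_mem _ hφ)

lemma exists_mem_orthUnitSphere_re_eq_secondEigenvalue (hd : 2 ≤ d) :
    ∃ φ ∈ orthUnitSphere ψ, (star φ ⬝ᵥ (Ω *ᵥ φ)).re = secondEigenvalue d Ω ψ := by
  rw [secondEigenvalue_eq_sSup_image]
  exact ((isCompact_orthUnitSphere ψ).image (continuous_re_star_dotProduct_mulVec Ω)).sSup_mem
    ((orthUnitSphere_nonempty (by simp; omega) ψ).image _)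

lemma re_dotProduct_mulVec_le_secondEigenvalue_mul {w : Fin d → ℂ} (hw : star w ⬝ᵥ ψ = 0) :
    (star w ⬝ᵥ (Ω *ᵥ w)).re ≤ secondEigenvalue d Ω ψ * (star w ⬝ᵥ w).re := by
  rcases eq_or_ne w 0 with rfl | hw0
  · simp
  obtain ⟨r, hr⟩ := exists_ofReal_smul_star_dotProduct_self_eq_one hw0
  have hle := re_dotProduct_mulVec_le_secondEigenvalue Ω ψ
    ⟨hr, by rw [star_smul, smul_dotProduct, hw, smul_zero]⟩
  have hnorm := congrArg Complex.re (star_smul_dotProduct_mulVec_smul 1 r w)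
  simp only [one_mulVec, hr, Complex.one_re, ← Complex.ofReal_pow, Complex.re_ofReal_mul] at hnorm
  rw [star_smul_dotProduct_mulVec_smul, ← Complex.ofReal_pow, Complex.re_ofReal_mul] at hle
  have hN : 0 ≤ (star w ⬝ᵥ w).re := by rw [re_star_dotProduct_self]; positivity
  linear_combination (star w ⬝ᵥ (Ω *ᵥ w)).re * hnorm + mul_nonneg hN (sub_nonneg.mpr hle)

lemma secondEigenvalue_le_one (hd : 2 ≤ d) (hΩle : (1 - Ω).PosSemidef) :
    secondEigenvalue d Ω ψ ≤ 1 := by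
  obtain ⟨φ, hφ, hφΩ⟩ := exists_mem_orthUnitSphere_re_eq_secondEigenvalue Ω ψ hd
  have h := hΩle.re_dotProduct_nonneg φ
  rw [sub_mulVec, one_mulVec, dotProduct_sub, hφ.1, RCLike.re_to_complex, Complex.sub_re,
    Complex.one_re, hφΩ] at h
  linarith

lemma re_dotProduct_mulVec_le_secondEigenvalue_smul_one_add (hΩ : Ω.IsHermitian)
    (hψ : star ψ ⬝ᵥ ψ = 1) (hΩψ : Ω *ᵥ ψ = ψ) (v : Fin d → ℂ) :
    (star v ⬝ᵥ (Ω *ᵥ v)).re ≤ (star v ⬝ᵥ ((secondEigenvalue d Ω ψ • 1 +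
      spectralGap d Ω ψ • vecMulVec ψ (star ψ)) *ᵥ v)).re := by
  have hw : star (v - (star ψ ⬝ᵥ v) • ψ) ⬝ᵥ ψ = 0 := by
    rw [star_dotProduct, dotProduct_sub, dotProduct_smul, hψ, smul_eq_mul, mul_one, sub_self,
      star_zero]
  have hΩv := congrArg Complex.re
    (star_dotProduct_mulVec_eq_add_of_mulVec_eq_self hΩ hψ hΩψ v)
  have hv := congrArg Complex.re
    (star_dotProduct_mulVec_eq_add_of_mulVec_eq_self isHermitian_one hψ (one_mulVec ψ) v)
  have hwle := re_dotProduct_mulVec_le_secondEigenvalue_mul Ω ψ hw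
  simp only [one_mulVec, Complex.add_re] at hΩv hv
  simp only [add_mulVec, smul_mulVec, one_mulVec, dotProduct_add, dotProduct_smul, Complex.add_re,
    Complex.smul_re, smul_eq_mul, dotProduct_vecMulVec_star_mulVec, spectralGap]
  rw [star_dotProduct v ψ]
  linear_combination hΩv - secondEigenvalue d Ω ψ * hv + hwle

lemma re_trace_mul_le_one_sub_spectralGap_mul (hΩ : Ω.IsHermitian) (hψ : star ψ ⬝ᵥ ψ = 1)
    (hΩψ : Ω *ᵥ ψ = ψ) {ρ : Matrix (Fin d) (Fin d) ℂ} (hρ : ρ.PosSemidef) (htr : ρ.trace = 1) :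
    (Ω * ρ).trace.re ≤ 1 - spectralGap d Ω ψ * (1 - (star ψ ⬝ᵥ (ρ *ᵥ ψ)).re) := by
  have h := re_trace_mul_le_of_forall_re_dotProduct_mulVec_le hρ
    (re_dotProduct_mulVec_le_secondEigenvalue_smul_one_add Ω ψ hΩ hψ hΩψ)
  rw [Matrix.add_mul, smul_mul, smul_mul, Matrix.one_mul, trace_add, trace_smul, trace_smul, htr,
    trace_mul_comm (vecMulVec ψ (star ψ)), trace_mul_vecMulVec_star] at h
  simp only [Complex.add_re, Complex.smul_re, Complex.one_re, smul_eq_mul, spectralGap] at h ⊢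
  linarith

end

theorem worst_case_passing_probability_general (d : ℕ) (hd : 2 ≤ d)
    (Ω : Matrix (Fin d) (Fin d) ℂ)
    (hΩherm : Ω.IsHermitian)
    (hΩle : ((1 : Matrix (Fin d) (Fin d) ℂ) - Ω).PosSemidef)
    (ψ : Fin d → ℂ) (hψ : star ψ ⬝ᵥ ψ = 1) (hΩψ : Ω *ᵥ ψ = ψ)
    (ε : ℝ) (hε0 : 0 ≤ ε) (hε1 : ε ≤ 1) :
    (∃ ρ : Matrix (Fin d) (Fin d) ℂ, ρ.PosSemidef ∧ ρ.trace = 1 ∧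
        (star ψ ⬝ᵥ (ρ *ᵥ ψ)).re = 1 - ε ∧
        (Ω * ρ).trace.re = 1 - spectralGap d Ω ψ * ε) ∧
      IsGreatest {x : ℝ | ∃ ρ : Matrix (Fin d) (Fin d) ℂ, ρ.PosSemidef ∧ ρ.trace = 1 ∧
          (star ψ ⬝ᵥ (ρ *ᵥ ψ)).re ≤ 1 - ε ∧ (Ω * ρ).trace.re = x}
        (1 - spectralGap d Ω ψ * ε) := by
  have hν : 0 ≤ spectralGap d Ω ψ := sub_nonneg.mpr (secondEigenvalue_le_one Ω ψ hd hΩle)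
  obtain ⟨φ, hφ, hφmax⟩ := exists_mem_orthUnitSphere_re_eq_secondEigenvalue Ω ψ hd
  obtain ⟨ρ, hρ, htr, hψρ, hΩρ⟩ :=
    exists_density_matrix_of_mem_orthUnitSphere hψ hφ Ω hΩψ hε0 hε1
  have hattain : (Ω * ρ).trace.re = 1 - spectralGap d Ω ψ * ε := by
    rw [hΩρ, hφmax, spectralGap]
    ring
  refine ⟨⟨ρ, hρ, htr, hψρ, hattain⟩, ⟨ρ, hρ, htr, hψρ.le, hattain⟩, ?_⟩
  rintro x ⟨σ, hσ, hσtr, hσψ, rfl⟩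
  calc (Ω * σ).trace.re ≤ 1 - spectralGap d Ω ψ * (1 - (star ψ ⬝ᵥ (σ *ᵥ ψ)).re) :=
        re_trace_mul_le_one_sub_spectralGap_mul Ω ψ hΩherm hψ hΩψ hσ hσtr
    _ ≤ 1 - spectralGap d Ω ψ * ε := by nlinarith

/-- For `d ≥ 2`, the bound `1 - ν(Ω) ε` on the passing probability is attained: there is
a density matrix `ρ` with `⟨ψ, ρ ψ⟩ = 1 - ε` and `Tr(Ω ρ) = 1 - ν(Ω) ε`, and `1 - ν(Ω) ε`
is the maximum of `Tr(Ω ρ)` over density matrices with `⟨ψ, ρ ψ⟩ ≤ 1 - ε`. -/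
theorem worst_case_passing_probability (d : ℕ) (hd : 2 ≤ d)
    (Ω : Matrix (Fin d) (Fin d) ℂ)
    (hΩherm : Ω.IsHermitian) (hΩpos : Ω.PosSemidef)
    (hΩle : ((1 : Matrix (Fin d) (Fin d) ℂ) - Ω).PosSemidef)
    (ψ : Fin d → ℂ) (hψ : star ψ ⬝ᵥ ψ = 1) (hΩψ : Ω *ᵥ ψ = ψ)
    (ε : ℝ) (hε0 : 0 ≤ ε) (hε1 : ε ≤ 1) :
    (∃ ρ : Matrix (Fin d) (Fin d) ℂ, ρ.PosSemidef ∧ ρ.trace = 1 ∧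
        (star ψ ⬝ᵥ (ρ *ᵥ ψ)).re = 1 - ε ∧
        (Ω * ρ).trace.re = 1 - spectralGap d Ω ψ * ε) ∧
      IsGreatest {x : ℝ | ∃ ρ : Matrix (Fin d) (Fin d) ℂ, ρ.PosSemidef ∧ ρ.trace = 1 ∧
          (star ψ ⬝ᵥ (ρ *ᵥ ψ)).re ≤ 1 - ε ∧ (Ω * ρ).trace.re = x}
        (1 - spectralGap d Ω ψ * ε) :=
  worst_case_passing_probability_general d hd Ω hΩherm hΩle ψ hψ hΩψ ε hε0 hε1
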